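/- arXiv:2007.05747 — 2 statements merged into one kernel-verified Lean document; each statement's English description precedes it below -/
import Mathlib

section
/- Let f : ℝⁿ → ℝ be differentiable with L-Lipschitz gradient, let β > L/2, let w ∈ ℝⁿ with w ≥ 0, λ > 0, and let x⁺ minimize over x the function ⟨∇f(xₖ), x - xₖ⟩ + (β/2)‖x - xₖ‖² + λ·Σᵢ wᵢ|xᵢ|. Then f(x⁺) + λ·Σᵢ wᵢ|x⁺ᵢ| ≤ f(xₖ) + λ·Σᵢ wᵢ|xₖᵢ| − (β − L/2)·‖x⁺ − xₖ‖². -/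
/-!
With `d = x⁺ - xₖ` and `R x = ∑ wᵢ |xᵢ|`, the descent lemma bounds `f x⁺` by the quadratic
model `f xₖ + ⟪∇f xₖ, d⟫ + L/2 ‖d‖²`. The prox objective is `β`-strongly convex (a quadratic
plus the convex term `λ R`), so it grows quadratically away from its minimiser `x⁺`; evaluating
at `xₖ` gives `⟪∇f xₖ, d⟫ + β ‖d‖² + λ R x⁺ ≤ λ R xₖ`. Adding the two bounds gives the claim.
-/

open scoped RealInnerProductSpace
open Set

theorem le_add_deriv_add_of_deriv_sub_le {φ φ' : ℝ → ℝ} {K : ℝ}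
    (hφ : ∀ t, HasDerivAt φ (φ' t) t) (hφ' : ∀ t ∈ Icc (0 : ℝ) 1, φ' t - φ' 0 ≤ K * t) :
    φ 1 ≤ φ 0 + φ' 0 + K / 2 := by
  have hψ : ∀ t, HasDerivAt (fun t ↦ φ t - φ' 0 * t - K / 2 * t ^ 2) (φ' t - φ' 0 - K * t) t :=
    fun t ↦ (((hφ t).fun_sub ((hasDerivAt_id' t).const_mul (φ' 0))).fun_sub
      ((hasDerivAt_pow 2 t).const_mul (K / 2))).congr_deriv (by ring)
  have hanti : AntitoneOn (fun t ↦ φ t - φ' 0 * t - K / 2 * t ^ 2) (Icc 0 1) := by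
    refine antitoneOn_of_hasDerivWithinAt_nonpos (convex_Icc 0 1)
      (HasDerivAt.continuousOn fun t _ ↦ hψ t) (fun t _ ↦ (hψ t).hasDerivWithinAt) fun t ht ↦ ?_
    rw [interior_Icc] at ht
    linarith [hφ' t (Ioo_subset_Icc_self ht)]
  have := hanti (left_mem_Icc.2 zero_le_one) (right_mem_Icc.2 zero_le_one) zero_le_one
  simp only at this
  linarith

section InnerProductSpace

variable {E : Type*} [NormedAddCommGroup E] [InnerProductSpace ℝ E]

theorem le_add_inner_gradient_add_sq [CompleteSpace E] {f : E → ℝ} {L : ℝ} {x : E}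
    (hf : Differentiable ℝ f) (hlip : ∀ z, ‖gradient f z - gradient f x‖ ≤ L * ‖z - x‖)
    (y : E) : f y ≤ f x + ⟪gradient f x, y - x⟫ + L / 2 * ‖y - x‖ ^ 2 := by
  set d := y - x
  have hderiv : ∀ t : ℝ, HasDerivAt (fun t ↦ f (x + t • d)) ⟪gradient f (x + t • d), d⟫ t := by
    intro t
    have hline : HasDerivAt (fun t : ℝ ↦ x + t • d) d t := by
      simpa using ((hasDerivAt_id t).smul_const d).const_add x
    simpa [Function.comp_def] using (hf _).hasGradientAt.hasFDerivAt.comp_hasDerivAt t hline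
  have hslope : ∀ t ∈ Icc (0 : ℝ) 1,
      ⟪gradient f (x + t • d), d⟫ - ⟪gradient f (x + (0 : ℝ) • d), d⟫ ≤ L * ‖d‖ ^ 2 * t := by
    intro t ht
    rw [zero_smul, add_zero, ← inner_sub_left]
    calc ⟪gradient f (x + t • d) - gradient f x, d⟫
        ≤ ‖gradient f (x + t • d) - gradient f x‖ * ‖d‖ := real_inner_le_norm _ _
      _ ≤ L * ‖t • d‖ * ‖d‖ := by
        gcongr
        simpa using hlip (x + t • d)
      _ = L * ‖d‖ ^ 2 * t := by rw [norm_smul, Real.norm_of_nonneg ht.1]; ring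
  have := le_add_deriv_add_of_deriv_sub_le hderiv hslope
  simp only [zero_smul, add_zero, one_smul, d, add_sub_cancel] at this
  linarith

theorem StrongConvexOn.add_sq_le_of_isMinOn {s : Set E} {m : ℝ} {f : E → ℝ} {x₀ x : E}
    (hf : StrongConvexOn s m f) (hmin : IsMinOn f s x₀) (hx₀ : x₀ ∈ s) (hx : x ∈ s) :
    f x₀ + m / 2 * ‖x - x₀‖ ^ 2 ≤ f x := by
  -- Compare `f x₀` with `f` at `t • x + (1 - t) • x₀`, then let `t → 0⁺`.
  have hsegment : ∀ t ∈ Ioo (0 : ℝ) 1, f x₀ + (1 - t) * (m / 2 * ‖x - x₀‖ ^ 2) ≤ f x := by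
    intro t ⟨ht₀, ht₁⟩
    have hconv := hf.2 hx hx₀ ht₀.le (sub_nonneg.2 ht₁.le) (add_sub_cancel t 1)
    have hle : f x₀ ≤ _ := hmin (hf.1 hx hx₀ ht₀.le (sub_nonneg.2 ht₁.le) (add_sub_cancel t 1))
    simp only [smul_eq_mul] at hconv hle
    nlinarith
  have hlim : Filter.Tendsto (fun t : ℝ ↦ f x₀ + (1 - t) * (m / 2 * ‖x - x₀‖ ^ 2))
      (nhdsWithin 0 (Ioi 0)) (nhds (f x₀ + m / 2 * ‖x - x₀‖ ^ 2)) :=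
    tendsto_nhdsWithin_of_tendsto_nhds ((by fun_prop : Continuous _).tendsto' 0 _ (by simp))
  exact le_of_tendsto hlim (Filter.eventually_of_mem (Ioo_mem_nhdsGT zero_lt_one) hsegment)

theorem strongConvexOn_inner_sub_add_sq_norm_sub (g c : E) (m : ℝ) :
    StrongConvexOn univ m fun x ↦ ⟪g, x - c⟫ + m / 2 * ‖x - c‖ ^ 2 := by
  rw [strongConvexOn_iff_convex]
  have : ConvexOn ℝ univ fun x ↦ ⟪g - m • c, x⟫ + (m / 2 * ‖c‖ ^ 2 - ⟪g, c⟫) :=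
    ((innerₗ E (g - m • c)).convexOn convex_univ).add_const _
  convert this using 2 with x
  rw [norm_sub_sq_real, inner_sub_left, inner_sub_right, real_inner_smul_left, real_inner_comm c x]
  ring

theorem StrongConvexOn.add_convexOn {s : Set E} {m : ℝ} {f g : E → ℝ}
    (hf : StrongConvexOn s m f) (hg : ConvexOn ℝ s g) : StrongConvexOn s m (f + g) := by
  simpa [StrongConvexOn] using hf.add (uniformConvexOn_zero.2 hg)

end InnerProductSpace

theorem convexOn_sum_mul_abs {ι : Type*} [Fintype ι] {w : ι → ℝ} (hw : ∀ i, 0 ≤ w i) :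
    ConvexOn ℝ univ fun x : EuclideanSpace ℝ ι ↦ ∑ i, w i * |x i| := by
  have := Finset.sum_induction (s := Finset.univ) (fun i (x : EuclideanSpace ℝ ι) ↦ w i * |x i|)
    (ConvexOn ℝ univ) (fun _ _ ↦ ConvexOn.add) (convexOn_const 0 convex_univ) fun i _ ↦
      ((convexOn_norm convex_univ).comp_linearMap
        (EuclideanSpace.proj i : _ →L[ℝ] ℝ).toLinearMap).smul (hw i)
  simpa [Finset.sum_fn] using this

theorem pirl1_sufficient_decrease_general (n : ℕ) (f : EuclideanSpace ℝ (Fin n) → ℝ)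
    (L : ℝ) (hf : Differentiable ℝ f)
    (hlip : ∀ x y, ‖gradient f x - gradient f y‖ ≤ L * ‖x - y‖)
    (β lam : ℝ) (hlam : 0 < lam)
    (w : Fin n → ℝ) (hw : ∀ i, 0 ≤ w i)
    (xk xp : EuclideanSpace ℝ (Fin n))
    (hmin : ∀ x : EuclideanSpace ℝ (Fin n),
      inner ℝ (gradient f xk) (xp - xk) + (β / 2) * ‖xp - xk‖ ^ 2 + lam * ∑ i, w i * |xp i|
        ≤ inner ℝ (gradient f xk) (x - xk) + (β / 2) * ‖x - xk‖ ^ 2 + lam * ∑ i, w i * |x i|) :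
    f xp + lam * ∑ i, w i * |xp i|
      ≤ f xk + lam * ∑ i, w i * |xk i| - (β - L / 2) * ‖xp - xk‖ ^ 2 := by
  have hdescent := le_add_inner_gradient_add_sq hf (hlip · xk) xp
  have hstrong : StrongConvexOn univ β fun x ↦
      ⟪gradient f xk, x - xk⟫ + β / 2 * ‖x - xk‖ ^ 2 + lam * ∑ i, w i * |x i| :=
    (strongConvexOn_inner_sub_add_sq_norm_sub _ xk β).add_convexOn
      ((convexOn_sum_mul_abs hw).smul hlam.le)
  have hgrowth := hstrong.add_sq_le_of_isMinOn (fun x _ ↦ hmin x) (mem_univ xp) (mem_univ xk)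
  simp only [sub_self, inner_zero_right, norm_zero, norm_sub_rev xk xp] at hgrowth
  linarith

theorem pirl1_sufficient_decrease (n : ℕ) (f : EuclideanSpace ℝ (Fin n) → ℝ)
    (L : ℝ) (hL : 0 ≤ L) (hf : Differentiable ℝ f)
    (hlip : ∀ x y, ‖gradient f x - gradient f y‖ ≤ L * ‖x - y‖)
    (β lam : ℝ) (hβ : L / 2 < β) (hlam : 0 < lam)
    (w : Fin n → ℝ) (hw : ∀ i, 0 ≤ w i)
    (xk xp : EuclideanSpace ℝ (Fin n))
    (hmin : ∀ x : EuclideanSpace ℝ (Fin n),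
      inner ℝ (gradient f xk) (xp - xk) + (β / 2) * ‖xp - xk‖ ^ 2 + lam * ∑ i, w i * |xp i|
        ≤ inner ℝ (gradient f xk) (x - xk) + (β / 2) * ‖x - xk‖ ^ 2 + lam * ∑ i, w i * |x i|) :
    f xp + lam * ∑ i, w i * |xp i|
      ≤ f xk + lam * ∑ i, w i * |xk i| - (β - L / 2) * ‖xp - xk‖ ^ 2 :=
  pirl1_sufficient_decrease_general n f L hf hlip β lam hlam w hw xk xp hmin
end

section
/- Let {Δ_t} be a positive nonincreasing sequence converging to 0, let θ ∈ (1/2, 1), and suppose there is C > 0 with Δ_t^{θ/(1−θ)} ≤ C·(Δ_{t−1} − Δ_t) for all t ≥ N. Then there is a constant C' > 0 such that Δ_t ≤ C'·t^{−(1−θ)/(2θ−1)} for all sufficiently large t. -/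
/-!
Put `p = (2θ - 1) / (1 - θ)`, so that the recursion reads `Δ_{t+1}^{p+1} ≤ C (Δ_t - Δ_{t+1})`,
and follow `Δ_t^{-p}`, which grows by at least a fixed amount `μ > 0` per step. If
`Δ_t ≤ 2 Δ_{t+1}`, the tangent of `s ↦ s^{-p}` at `Δ_t` bounds the increment below by
`p Δ_t^{-p-1} (Δ_t - Δ_{t+1}) ≥ p / (C 2^{p+1})`; otherwise `Δ_{t+1}^{-p} ≥ 2^p Δ_t^{-p}`, so the
increment is at least `(2^p - 1) Δ_0^{-p}`. Hence `Δ_t^{-p} ≥ μ t / 2` eventually, i.e.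
`Δ_t ≤ (μ / 2)^{-1/p} t^{-1/p}`.
-/

open Real

namespace Real

/-- The tangent line of the convex function `s ↦ s ^ (-p)` at `b` lies below it. -/
lemma mul_rpow_neg_sub_one_mul_sub_le {p a b : ℝ} (hp : 0 < p) (ha : 0 < a) (hab : a ≤ b) :
    p * b ^ (-p - 1) * (b - a) ≤ a ^ (-p) - b ^ (-p) := by
  have hb : 0 < b := ha.trans_le hab
  set x := b / a with hx
  have hx0 : 0 < x := div_pos hb ha
  have hbern : 1 + (p + 1) * (x - 1) ≤ x ^ p * x := by
    rw [← rpow_add_one hx0.ne']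
    simpa using one_add_mul_self_le_rpow_one_add (s := x - 1)
      (by linarith [(one_le_div ha).mpr hab]) (p := p + 1) (by linarith)
  have hxp : 1 + p * (b - a) / b ≤ x ^ p := by
    have : 1 + p * (b - a) / b = 1 + p * (x - 1) / x := by rw [hx]; field_simp
    rw [this, add_comm, div_add' _ _ _ hx0.ne', div_le_iff₀ hx0]
    nlinarith
  have hxb : x ^ p * b ^ (-p) = a ^ (-p) := by
    rw [hx, div_rpow hb.le ha.le, rpow_neg hb.le, rpow_neg ha.le]
    field_simp
  have hpb : p * (b - a) / b * b ^ (-p) = p * b ^ (-p - 1) * (b - a) := by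
    rw [sub_eq_add_neg (-p), rpow_add hb, rpow_neg_one]
    field_simp
  have := mul_le_mul_of_nonneg_right hxp (rpow_pos_of_pos hb (-p)).le
  rw [add_mul, one_mul, hpb, hxb] at this
  linarith

lemma rpow_neg_add_le_of_le_two_mul {p C a b : ℝ} (hp : 0 < p) (hC : 0 < C) (ha : 0 < a)
    (hab : a ≤ b) (hb2a : b ≤ 2 * a) (hrec : a ^ (p + 1) ≤ C * (b - a)) :
    b ^ (-p) + p / (C * 2 ^ (p + 1)) ≤ a ^ (-p) := by
  have hb : 0 < b := ha.trans_le hab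
  have hgap : b ^ (p + 1) / 2 ^ (p + 1) / C ≤ b - a := by
    rw [div_le_iff₀' hC, ← div_rpow hb.le zero_le_two]
    exact (rpow_le_rpow (by positivity) (by linarith) (by linarith)).trans hrec
  have hcancel : b ^ (-p - 1) * b ^ (p + 1) = 1 := by
    rw [← rpow_add hb]
    norm_num
  calc b ^ (-p) + p / (C * 2 ^ (p + 1))
      = b ^ (-p) + p * b ^ (-p - 1) * (b ^ (p + 1) / 2 ^ (p + 1) / C) := by
        rw [show p * b ^ (-p - 1) * (b ^ (p + 1) / 2 ^ (p + 1) / C)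
          = p * (b ^ (-p - 1) * b ^ (p + 1)) / (C * 2 ^ (p + 1)) by ring, hcancel, mul_one]
    _ ≤ b ^ (-p) + p * b ^ (-p - 1) * (b - a) := by gcongr
    _ ≤ a ^ (-p) := by linarith [mul_rpow_neg_sub_one_mul_sub_le hp ha hab]

lemma rpow_neg_add_le_of_two_mul_le {p a b D : ℝ} (hp : 0 < p) (ha : 0 < a) (h2ab : 2 * a ≤ b)
    (hbD : b ≤ D) : b ^ (-p) + (2 ^ p - 1) * D ^ (-p) ≤ a ^ (-p) := by
  have hb : 0 < b := by linarith
  have h2p : 1 ≤ (2 : ℝ) ^ p := one_le_rpow one_le_two hp.le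
  have hhalf : (b / 2) ^ (-p) = 2 ^ p * b ^ (-p) := by
    rw [div_rpow hb.le zero_le_two, rpow_neg zero_le_two]
    field_simp
  have hDb : D ^ (-p) ≤ b ^ (-p) := rpow_le_rpow_of_nonpos hb hbD (by linarith)
  calc b ^ (-p) + (2 ^ p - 1) * D ^ (-p)
      ≤ b ^ (-p) + (2 ^ p - 1) * b ^ (-p) := by gcongr
    _ = (b / 2) ^ (-p) := by rw [hhalf]; ring
    _ ≤ a ^ (-p) := rpow_le_rpow_of_nonpos ha (by linarith) (by linarith)

lemma rpow_neg_add_min_le {p C a b D : ℝ} (hp : 0 < p) (hC : 0 < C) (ha : 0 < a) (hab : a ≤ b)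
    (hbD : b ≤ D) (hrec : a ^ (p + 1) ≤ C * (b - a)) :
    b ^ (-p) + min (p / (C * 2 ^ (p + 1))) ((2 ^ p - 1) * D ^ (-p)) ≤ a ^ (-p) := by
  rcases le_or_gt b (2 * a) with hb2a | h2ab
  · linarith [min_le_left (p / (C * 2 ^ (p + 1))) ((2 ^ p - 1) * D ^ (-p)),
      rpow_neg_add_le_of_le_two_mul hp hC ha hab hb2a hrec]
  · linarith [min_le_right (p / (C * 2 ^ (p + 1))) ((2 ^ p - 1) * D ^ (-p)),
      rpow_neg_add_le_of_two_mul_le hp ha h2ab.le hbD]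

lemma le_mul_rpow_of_mul_le_rpow_neg {p c x t : ℝ} (hp : 0 < p) (hx : 0 < x) (hc : 0 < c)
    (ht : 0 < t) (h : c * t ≤ x ^ (-p)) :
    x ≤ c ^ (-1 / p) * t ^ (-1 / p) := by
  have hinv : (x ^ (-p)) ^ (-1 / p) = x := by
    rw [← rpow_mul hx.le, show -p * (-1 / p) = 1 by field_simp, rpow_one]
  rw [← mul_rpow hc.le ht.le, ← hinv]
  exact rpow_le_rpow_of_nonpos (mul_pos hc ht) h
    (div_nonpos_of_nonpos_of_nonneg (by norm_num) hp.le)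

end Real

lemma add_natCast_mul_le_of_add_le_succ {f : ℕ → ℝ} {μ : ℝ} {N : ℕ}
    (hf : ∀ n, N ≤ n → f n + μ ≤ f (n + 1)) (k : ℕ) : f N + k * μ ≤ f (N + k) := by
  induction k with
  | zero => simp
  | succ k ih =>
    rw [← add_assoc]
    push_cast
    linarith [hf (N + k) (Nat.le_add_right N k)]

theorem exists_le_mul_rpow_neg_inv_of_rpow_add_one_le {p C : ℝ} (hp : 0 < p) (hC : 0 < C)
    {Δ : ℕ → ℝ} (hpos : ∀ t, 0 < Δ t) (hmono : Antitone Δ) {N : ℕ}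
    (hrec : ∀ t, N ≤ t → Δ (t + 1) ^ (p + 1) ≤ C * (Δ t - Δ (t + 1))) :
    ∃ C' : ℝ, 0 < C' ∧ ∃ M : ℕ, ∀ t, M ≤ t → Δ t ≤ C' * (t : ℝ) ^ (-1 / p) := by
  set μ := min (p / (C * 2 ^ (p + 1))) ((2 ^ p - 1) * Δ 0 ^ (-p))
  have hμ : 0 < μ := lt_min (by positivity)
    (mul_pos (by linarith [one_lt_rpow one_lt_two hp]) (rpow_pos_of_pos (hpos 0) _))
  have hgrowth := add_natCast_mul_le_of_add_le_succ (f := fun t ↦ Δ t ^ (-p)) (μ := μ) (N := N)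
    fun t ht ↦ rpow_neg_add_min_le hp hC (hpos _) (hmono t.le_succ) (hmono t.zero_le) (hrec t ht)
  refine ⟨(μ / 2) ^ (-1 / p), rpow_pos_of_pos (half_pos hμ) _, 2 * N + 1, fun t ht ↦ ?_⟩
  obtain ⟨k, rfl⟩ := Nat.exists_eq_add_of_le (show N ≤ t by omega)
  have hk : ((N + k : ℕ) : ℝ) ≤ 2 * k := by exact_mod_cast (show N + k ≤ 2 * k by omega)
  have htpos : (0 : ℝ) < (N + k : ℕ) := by exact_mod_cast (show 0 < N + k by omega)
  refine le_mul_rpow_of_mul_le_rpow_neg hp (hpos _) (half_pos hμ) htpos ?_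
  nlinarith [hgrowth k, rpow_pos_of_pos (hpos N) (-p)]

theorem kl_recursion_sublinear_rate_general (θ : ℝ) (hθ1 : 1 / 2 < θ) (hθ2 : θ < 1)
    (Δ : ℕ → ℝ) (hpos : ∀ t, 0 < Δ t) (hmono : Antitone Δ)
    (C : ℝ) (hC : 0 < C) (N : ℕ)
    (hrec : ∀ t, N ≤ t → Δ t ^ (θ / (1 - θ)) ≤ C * (Δ (t - 1) - Δ t)) :
    ∃ C' : ℝ, 0 < C' ∧ ∃ M : ℕ, ∀ t, M ≤ t →
      Δ t ≤ C' * (t : ℝ) ^ (-(1 - θ) / (2 * θ - 1)) := by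
  have h1θ : 0 < 1 - θ := by linarith
  have h2θ : 0 < 2 * θ - 1 := by linarith
  have hexp : θ / (1 - θ) = (2 * θ - 1) / (1 - θ) + 1 := by field_simp; ring
  have hrate : -(1 - θ) / (2 * θ - 1) = -1 / ((2 * θ - 1) / (1 - θ)) := by field_simp
  rw [hrate]
  refine exists_le_mul_rpow_neg_inv_of_rpow_add_one_le (div_pos h2θ h1θ) hC hpos hmono
    (N := N) fun t ht ↦ ?_
  simpa [hexp] using hrec (t + 1) (by omega)

theorem kl_recursion_sublinear_rate (θ : ℝ) (hθ1 : 1 / 2 < θ) (hθ2 : θ < 1)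
    (Δ : ℕ → ℝ) (hpos : ∀ t, 0 < Δ t) (hmono : Antitone Δ)
    (hlim : Filter.Tendsto Δ Filter.atTop (nhds 0))
    (C : ℝ) (hC : 0 < C) (N : ℕ)
    (hrec : ∀ t, N ≤ t → Δ t ^ (θ / (1 - θ)) ≤ C * (Δ (t - 1) - Δ t)) :
    ∃ C' : ℝ, 0 < C' ∧ ∃ M : ℕ, ∀ t, M ≤ t →
      Δ t ≤ C' * (t : ℝ) ^ (-(1 - θ) / (2 * θ - 1)) :=
  kl_recursion_sublinear_rate_general θ hθ1 hθ2 Δ hpos hmono C hC N hrec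
end
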